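/- arXiv:1912.08730 — 5 statements merged into one kernel-verified Lean document; each statement's English description precedes it below -/
import Mathlib

section
/- For integers ℓ, m with 2m - ℓ < -1 and a complex number z with nonzero imaginary part, the integral I(ℓ,m) = ∫_{-∞}^{∞} (x+z)^{m-ℓ} (x+z̄)^{m} dx satisfies the recursion I(ℓ,m) = (m/(ℓ-m-1)) · I(ℓ-2, m-1) whenever m ≥ 1. -/
/-!
Integration by parts with no boundary terms. For `a + b ≤ -1` the function
`F = (x + z)^a (x + z̄)^b` has modulus `|x + z|^(a + b)`, so it vanishes at `±∞`, and
`F' = a (x + z)^(a-1) (x + z̄)^b + b (x + z)^a (x + z̄)^(b-1)` has integral `0`. Both summands are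
integrable because `|x + z|^n ≤ |Im z|^(n+2) / ((x + Re z)² + (Im z)²)` for `n ≤ -2`.
Taking `a = m - ℓ + 1`, `b = m` gives `(m - ℓ + 1) I(ℓ, m) = -m I(ℓ - 2, m - 1)`.
-/

open MeasureTheory Filter Topology ComplexConjugate

lemma zpow_le_zpow_left_of_nonpos₀ {a b : ℝ} {n : ℤ} (hn : n ≤ 0) (ha : 0 < a) (hab : a ≤ b) :
    b ^ n ≤ a ^ n := by
  have h := inv_anti₀ (zpow_pos ha (-n)) (zpow_le_zpow_left₀ (neg_nonneg.mpr hn) ha.le hab)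
  rwa [zpow_neg, zpow_neg, inv_inv, inv_inv] at h

lemma integrable_inv_add_sq_add_sq (a : ℝ) {b : ℝ} (hb : b ≠ 0) :
    Integrable fun x : ℝ => ((x + a) ^ 2 + b ^ 2)⁻¹ := by
  have h := ((integrable_inv_one_add_sq.comp_div hb).const_mul (b ^ 2)⁻¹).comp_add_right a
  refine h.congr (Eventually.of_forall fun x => ?_)
  simp only
  field_simp
  ring

namespace Complex

lemma ofReal_add_ne_zero {z : ℂ} (hz : z.im ≠ 0) (x : ℝ) : (x : ℂ) + z ≠ 0 := fun h =>
  hz (by simpa using congrArg im h)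

lemma abs_im_le_norm_ofReal_add (z : ℂ) (x : ℝ) : |z.im| ≤ ‖(x : ℂ) + z‖ := by
  simpa using abs_im_le_norm ((x : ℂ) + z)

lemma norm_ofReal_add_zpow_two (z : ℂ) (x : ℝ) :
    ‖(x : ℂ) + z‖ ^ (2 : ℤ) = (x + z.re) ^ 2 + z.im ^ 2 := by
  rw [zpow_two, ← sq, Complex.sq_norm, normSq_apply]
  simp only [add_re, ofReal_re, add_im, ofReal_im, zero_add]
  ring

lemma tendsto_norm_ofReal_add_cocompact (z : ℂ) :
    Tendsto (fun x : ℝ => ‖(x : ℂ) + z‖) (cocompact ℝ) atTop := by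
  refine tendsto_atTop_mono (fun x => ?_)
    (tendsto_atTop_add_const_right _ (-‖z‖) tendsto_norm_cocompact_atTop)
  simpa [sub_eq_add_neg] using norm_sub_norm_le (x : ℂ) (-z)

end Complex

open Complex

/-- `I(ℓ, m) = ∫ x, integrand z (m - ℓ) m x`. -/
noncomputable def integrand (z : ℂ) (a b : ℤ) (x : ℝ) : ℂ :=
  ((x : ℂ) + z) ^ a * ((x : ℂ) + conj z) ^ b

section integrand

variable {z : ℂ}

lemma norm_integrand (hz : z.im ≠ 0) (a b : ℤ) (x : ℝ) :
    ‖integrand z a b x‖ = ‖(x : ℂ) + z‖ ^ (a + b) := by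
  have hconj : (x : ℂ) + conj z = conj ((x : ℂ) + z) := by simp
  rw [integrand, norm_mul, norm_zpow, norm_zpow, hconj, norm_conj,
    ← zpow_add₀ (norm_ne_zero_iff.mpr (ofReal_add_ne_zero hz x))]

lemma continuous_integrand (hz : z.im ≠ 0) (a b : ℤ) : Continuous (integrand z a b) := by
  have hconj : (conj z).im ≠ 0 := by simpa using hz
  exact ((continuous_ofReal.add continuous_const).zpow₀ a
    fun x => Or.inl (ofReal_add_ne_zero hz x)).mul
    ((continuous_ofReal.add continuous_const).zpow₀ b
    fun x => Or.inl (ofReal_add_ne_zero hconj x))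

lemma integrable_integrand (hz : z.im ≠ 0) (a b : ℤ) (hab : a + b ≤ -2) :
    Integrable (integrand z a b) := by
  refine ((integrable_inv_add_sq_add_sq z.re hz).const_mul (|z.im| ^ (a + b + 2))).mono'
    (continuous_integrand hz a b).aestronglyMeasurable (Eventually.of_forall fun x => ?_)
  have hw : 0 < ‖(x : ℂ) + z‖ := norm_pos_iff.mpr (ofReal_add_ne_zero hz x)
  rw [norm_integrand hz, ← norm_ofReal_add_zpow_two]
  calc ‖(x : ℂ) + z‖ ^ (a + b)
        = ‖(x : ℂ) + z‖ ^ (a + b + 2) * (‖(x : ℂ) + z‖ ^ (2 : ℤ))⁻¹ := by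
        rw [← zpow_neg, ← zpow_add₀ hw.ne']; ring_nf
    _ ≤ |z.im| ^ (a + b + 2) * (‖(x : ℂ) + z‖ ^ (2 : ℤ))⁻¹ := by
        gcongr
        exact zpow_le_zpow_left_of_nonpos₀ (by omega) (abs_pos.mpr hz)
          (abs_im_le_norm_ofReal_add z x)

lemma tendsto_integrand_cocompact (hz : z.im ≠ 0) (a b : ℤ) (hab : a + b < 0) :
    Tendsto (integrand z a b) (cocompact ℝ) (𝓝 0) := by
  rw [tendsto_zero_iff_norm_tendsto_zero]
  simp_rw [norm_integrand hz]
  exact (tendsto_zpow_atTop_zero hab).comp (tendsto_norm_ofReal_add_cocompact z)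

lemma hasDerivAt_integrand (hz : z.im ≠ 0) (a b : ℤ) (x : ℝ) :
    HasDerivAt (integrand z a b)
      (a * integrand z (a - 1) b x + b * integrand z a (b - 1) x) x := by
  have hconj : (conj z).im ≠ 0 := by simpa using hz
  have hzpow {w : ℂ} (hw : w.im ≠ 0) (n : ℤ) :
      HasDerivAt (fun y : ℝ => ((y : ℂ) + w) ^ n) (n * ((x : ℂ) + w) ^ (n - 1)) x := by
    simpa using ((hasDerivAt_zpow n _ (Or.inl (ofReal_add_ne_zero hw x))).comp (x : ℂ)
      ((hasDerivAt_id _).add_const w)).comp_ofReal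
  refine ((hzpow hz a).mul (hzpow hconj b)).congr_deriv ?_
  simp only [integrand]
  ring

theorem integral_integrand_recursion (hz : z.im ≠ 0) (a b : ℤ) (hab : a + b ≤ -1) :
    (a : ℂ) * ∫ x, integrand z (a - 1) b x = -(b * ∫ x, integrand z a (b - 1) x) := by
  have hint₁ := (integrable_integrand hz (a - 1) b (by omega)).const_mul (a : ℂ)
  have hint₂ := (integrable_integrand hz a (b - 1) (by omega)).const_mul (b : ℂ)
  have hzero := integral_of_hasDerivAt_of_tendsto (hasDerivAt_integrand hz a b)
    (hint₁.add hint₂)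
    ((tendsto_integrand_cocompact hz a b (by omega)).mono_left atBot_le_cocompact)
    ((tendsto_integrand_cocompact hz a b (by omega)).mono_left atTop_le_cocompact)
  rw [integral_add hint₁ hint₂, integral_const_mul, integral_const_mul, sub_self] at hzero
  exact eq_neg_of_add_eq_zero_left hzero

end integrand

/-- Integration-by-parts recursion for the integral
`I(ℓ,m) = ∫_{-∞}^{∞} (x+z)^{m-ℓ} (x+z̄)^{m} dx`: for integers `ℓ, m` with `2m - ℓ < -1`,
`m ≥ 1`, and `z` non-real, `I(ℓ,m) = (m/(ℓ-m-1)) · I(ℓ-2, m-1)`. -/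
theorem integral_recursion (ℓ m : ℤ) (hm : 1 ≤ m) (hconv : 2 * m - ℓ < -1)
    (z : ℂ) (hz : z.im ≠ 0) :
    (∫ x : ℝ, ((x : ℂ) + z) ^ (m - ℓ) * ((x : ℂ) + (starRingEnd ℂ) z) ^ m)
      = ((m : ℂ) / ((ℓ : ℂ) - (m : ℂ) - 1)) *
        ∫ x : ℝ, ((x : ℂ) + z) ^ ((m - 1) - (ℓ - 2)) * ((x : ℂ) + (starRingEnd ℂ) z) ^ (m - 1) := by
  have hrec := integral_integrand_recursion hz (m - ℓ + 1) m (by omega)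
  rw [show m - ℓ + 1 - 1 = m - ℓ by ring] at hrec
  have hne : (ℓ : ℂ) - m - 1 ≠ 0 := by
    have hℓ : ℓ - m - 1 ≠ 0 := by omega
    exact_mod_cast hℓ
  change ∫ x, integrand z (m - ℓ) m x = _ * ∫ x, integrand z (m - 1 - (ℓ - 2)) (m - 1) x
  rw [show m - 1 - (ℓ - 2) = m - ℓ + 1 by ring, div_mul_eq_mul_div, eq_div_iff hne]
  push_cast at hrec
  linear_combination -hrec
end

section
/- Let C be a real symmetric 2n×2n matrix such that I + C² is invertible. Set U = C(I + C²)^{-1} and let Y be a real matrix with Y·Yᵀ = (I + C²)^{-1}. Then the symplectic matrix [[I,0],[C,I]] can be written as [[I,U],[0,I]]·[[Y,0],[0,(Yᵀ)^{-1}]]·g where g lies in the maximal compact subgroup U(2n) ⊂ Sp(4n,ℝ), and moreover J(g, iI) = det(Y)·det(iC + I), where J([[A,B],[C,D]], Z) = det(CZ + D). -/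
open Matrix

/-- Iwasawa-type decomposition: for a real symmetric `2n × 2n` matrix `C` with `I + C²`
invertible, setting `U = C(I+C²)⁻¹` and taking `Y` with `Y Yᵀ = (I+C²)⁻¹`, the symplectic
matrix `[[I,0],[C,I]]` equals `[[I,U],[0,I]]·[[Y,0],[0,(Yᵀ)⁻¹]]·g` with `g` in the maximal
compact subgroup `U(2n)` (i.e. `g` symplectic and orthogonal), and
`J(g, iI) = det(Y)·det(iC + I)`. -/
theorem iwasawa_decomposition (n : ℕ)
    (C : Matrix (Fin (2 * n)) (Fin (2 * n)) ℝ) (hC : C.IsSymm)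
    (hinv : IsUnit (1 + C * C))
    (U Y : Matrix (Fin (2 * n)) (Fin (2 * n)) ℝ)
    (hU : U = C * (1 + C * C)⁻¹)
    (hY : Y * Yᵀ = (1 + C * C)⁻¹) :
    ∃ g : Matrix (Fin (2 * n) ⊕ Fin (2 * n)) (Fin (2 * n) ⊕ Fin (2 * n)) ℝ,
      g ∈ Matrix.symplecticGroup (Fin (2 * n)) ℝ ∧ gᵀ * g = 1 ∧
      Matrix.fromBlocks 1 0 C 1 =
        Matrix.fromBlocks 1 U 0 1 * Matrix.fromBlocks Y 0 0 (Yᵀ)⁻¹ * g ∧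
      (Complex.I • (Matrix.toBlocks₂₁ g).map (Complex.ofReal)
          + (Matrix.toBlocks₂₂ g).map (Complex.ofReal)).det
        = (Y.det : ℂ) * (Complex.I • C.map (Complex.ofReal) + 1).det := by
  have hCt : Cᵀ = C := hC
  set P := 1 + C * C with hP
  have hPdet : IsUnit P.det := (Matrix.isUnit_iff_isUnit_det P).mp hinv
  have hPPi : P * P⁻¹ = 1 := Matrix.mul_nonsing_inv P hPdet
  have hPiP : P⁻¹ * P = 1 := Matrix.nonsing_inv_mul P hPdet
  have hCP : Commute C P := by
    show C * P = P * C
    rw [hP]; noncomm_ring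
  have hCPi : C * P⁻¹ = P⁻¹ * C := by
    obtain ⟨u, hu⟩ := hinv
    have hu' : (u : Matrix _ _ _) = P := hu
    have h1 : Commute C (u : Matrix _ _ _) := by rw [hu']; exact hCP
    have h2 := h1.units_inv_right
    have h3 : (↑u⁻¹ : Matrix _ _ _) = P⁻¹ := by
      rw [Matrix.coe_units_inv, hu']
    rw [← h3]; exact h2
  have hYP : Y * (Yᵀ * P) = 1 := by rw [← mul_assoc, hY, hPiP]
  have hPY : (Yᵀ * P) * Y = 1 := mul_eq_one_comm.mp hYP
  have hYdet : IsUnit Y.det := by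
    apply isUnit_of_mul_isUnit_left (y := (Yᵀ * P).det)
    rw [← Matrix.det_mul, hYP, Matrix.det_one]; exact isUnit_one
  have hYtY : (Yᵀ)⁻¹ * Yᵀ = 1 := by
    apply Matrix.nonsing_inv_mul
    rw [Matrix.det_transpose]; exact hYdet
  have k1 : Y * Yᵀ + C * (Y * Yᵀ) * C = 1 := by
    rw [hY, hCPi]
    have : P⁻¹ + P⁻¹ * C * C = P⁻¹ * (1 + C * C) := by noncomm_ring
    rw [this, ← hP, hPiP]
  have kPY : Yᵀ * (1 + C * C) * Y = 1 := by rw [← hP]; exact hPY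
  have k2 : C * (Y * Yᵀ) = (Y * Yᵀ) * C := by rw [hY]; exact hCPi
  have hUY : U = (Y * Yᵀ) * C := by rw [hU, hY, hCPi]
  refine ⟨Matrix.fromBlocks Yᵀ (-(Yᵀ * C)) (Yᵀ * C) Yᵀ, ?_, ?_, ?_, ?_⟩
  · rw [SymplecticGroup.mem_iff, Matrix.J]
    simp only [Matrix.fromBlocks_transpose, Matrix.fromBlocks_multiply,
      Matrix.transpose_neg, Matrix.transpose_mul, Matrix.transpose_transpose, hCt]
    rw [Matrix.fromBlocks_inj]
    refine ⟨?_, ?_, ?_, ?_⟩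
    · noncomm_ring
    · have e : (Yᵀ * 0 + -(Yᵀ * C) * 1) * (C * Y) + (Yᵀ * -1 + -(Yᵀ * C) * 0) * Y
          = -(Yᵀ * (1 + C * C) * Y) := by noncomm_ring
      rw [e, kPY]
    · have e : (Yᵀ * C * 0 + Yᵀ * 1) * Y + (Yᵀ * C * -1 + Yᵀ * 0) * -(C * Y)
          = Yᵀ * (1 + C * C) * Y := by noncomm_ring
      rw [e, kPY]
    · noncomm_ring
  · rw [Matrix.fromBlocks_transpose]
    simp only [Matrix.fromBlocks_multiply, Matrix.transpose_neg,
      Matrix.transpose_mul, Matrix.transpose_transpose, hCt]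
    rw [← Matrix.fromBlocks_one, Matrix.fromBlocks_inj]
    refine ⟨?_, ?_, ?_, ?_⟩
    · have e : Y * Yᵀ + C * Y * (Yᵀ * C) = Y * Yᵀ + C * (Y * Yᵀ) * C := by
        noncomm_ring
      rw [e, k1]
    · have e : Y * -(Yᵀ * C) + C * Y * Yᵀ = C * (Y * Yᵀ) - (Y * Yᵀ) * C := by
        noncomm_ring
      rw [e, k2, sub_self]
    · have e : -(C * Y) * Yᵀ + Y * (Yᵀ * C) = (Y * Yᵀ) * C - C * (Y * Yᵀ) := by
        noncomm_ring
      rw [e, ← k2, sub_self]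
    · have e : -(C * Y) * -(Yᵀ * C) + Y * Yᵀ = Y * Yᵀ + C * (Y * Yᵀ) * C := by
        noncomm_ring
      rw [e, k1]
  · simp only [Matrix.fromBlocks_multiply]
    rw [Matrix.fromBlocks_inj]
    refine ⟨?_, ?_, ?_, ?_⟩
    · have e : (1 * Y + U * 0) * Yᵀ + (1 * 0 + U * Yᵀ⁻¹) * (Yᵀ * C)
          = Y * Yᵀ + U * ((Yᵀ⁻¹ * Yᵀ) * C) := by noncomm_ring
      rw [e, hYtY, one_mul, hUY, ← k1, k2]
    · have e : (1 * Y + U * 0) * -(Yᵀ * C) + (1 * 0 + U * Yᵀ⁻¹) * Yᵀ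
          = U * (Yᵀ⁻¹ * Yᵀ) - Y * Yᵀ * C := by noncomm_ring
      rw [e, hYtY, mul_one, hUY, sub_self]
    · have e : (0 * Y + 1 * 0) * Yᵀ + (0 * 0 + 1 * Yᵀ⁻¹) * (Yᵀ * C)
          = (Yᵀ⁻¹ * Yᵀ) * C := by noncomm_ring
      rw [e, hYtY, one_mul]
    · have e : (0 * Y + 1 * 0) * -(Yᵀ * C) + (0 * 0 + 1 * Yᵀ⁻¹) * Yᵀ
          = Yᵀ⁻¹ * Yᵀ := by noncomm_ring
      rw [e, hYtY]
  · simp only [Matrix.toBlocks_fromBlocks₂₁, Matrix.toBlocks_fromBlocks₂₂]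
    have hmap : (Yᵀ * C).map (Complex.ofReal) = Yᵀ.map Complex.ofReal * C.map Complex.ofReal := by
      ext i j
      simp [Matrix.mul_apply]
    have key : Complex.I • (Yᵀ.map Complex.ofReal * C.map Complex.ofReal)
          + Yᵀ.map Complex.ofReal
        = Yᵀ.map Complex.ofReal * (Complex.I • C.map Complex.ofReal + 1) := by
      rw [mul_add, mul_one, mul_smul_comm]
    rw [hmap, key, Matrix.det_mul]
    congr 1
    calc (Yᵀ.map Complex.ofReal).det = ((Y.map Complex.ofReal)ᵀ).det := by
          rw [Matrix.transpose_map]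
    _ = (Y.map Complex.ofReal).det := Matrix.det_transpose _
    _ = (Y.det : ℂ) := (RingHom.map_det Complex.ofRealHom Y).symm
end

section
/- Let M be a complex symmetric n×n matrix in the Siegel upper half space (i.e., Im(M) is positive definite), with n ≥ 2. Let M₁₁ be the (n-1)×(n-1) submatrix of M obtained by deleting the first row and first column. Then det(M)/det(M₁₁) is not a real number. -/
/-!
If `M = X + iY` is symmetric with `Y > 0`, then `Im (v* M v) = aᵀYa + bᵀYb > 0` for every
nonzero `v = a + ib`, because the contribution of `X` is antisymmetric in `(a, b)`. Taking `v` the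
first column of `M⁻¹` gives `Im (M⁻¹)₀₀ < 0`, and by Cramer's rule
`(M⁻¹)₀₀ = det M₁₁ / det M`, so `det M / det M₁₁` lies in the upper half plane.
-/

namespace Matrix

variable {m : Type*} [Fintype m]

def IsSiegel (M : Matrix m m ℂ) : Prop := M.IsSymm ∧ (M.map Complex.im).PosDef

theorem IsSymm.im_star_dotProduct_mulVec {M : Matrix m m ℂ} (hM : M.IsSymm) (v : m → ℂ) :
    (star v ⬝ᵥ M *ᵥ v).im =
      (Complex.re ∘ v) ⬝ᵥ M.map Complex.im *ᵥ (Complex.re ∘ v) +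
        (Complex.im ∘ v) ⬝ᵥ M.map Complex.im *ᵥ (Complex.im ∘ v) := by
  have hskew : ∑ i, ∑ j, (M i j).re * ((v i).re * (v j).im - (v i).im * (v j).re) = 0 := by
    simp only [mul_sub, Finset.sum_sub_distrib]
    rw [sub_eq_zero, Finset.sum_comm]
    refine Finset.sum_congr rfl fun i _ => Finset.sum_congr rfl fun j _ => ?_
    rw [hM.apply]
    ring
  simp only [dotProduct, mulVec, Pi.star_apply, map_apply, Function.comp_apply,
    Finset.mul_sum, Complex.im_sum, ← Finset.sum_add_distrib]
  rw [← sub_zero (∑ i, _), ← hskew, ← Finset.sum_sub_distrib]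
  refine Finset.sum_congr rfl fun i _ => ?_
  rw [← Finset.sum_sub_distrib]
  refine Finset.sum_congr rfl fun j _ => ?_
  simp only [Complex.star_def, Complex.mul_im, Complex.mul_re, Complex.conj_re, Complex.conj_im]
  ring

namespace IsSiegel

variable {M : Matrix m m ℂ} (hM : M.IsSiegel)
include hM

theorem im_star_dotProduct_mulVec_pos {v : m → ℂ} (hv : v ≠ 0) :
    0 < (star v ⬝ᵥ M *ᵥ v).im := by
  have hpos := hM.2
  rw [hM.1.im_star_dotProduct_mulVec]
  have hre := hpos.posSemidef.dotProduct_mulVec_nonneg (Complex.re ∘ v)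
  have him := hpos.posSemidef.dotProduct_mulVec_nonneg (Complex.im ∘ v)
  simp only [star_trivial] at hre him
  by_cases hv_re : Complex.re ∘ v = 0
  · have hv_im : Complex.im ∘ v ≠ 0 := fun hv_im =>
      hv (funext fun i => Complex.ext (congrFun hv_re i) (congrFun hv_im i))
    simpa using add_lt_add_of_le_of_lt hre (hpos.dotProduct_mulVec_pos hv_im)
  · simpa using add_lt_add_of_lt_of_le (hpos.dotProduct_mulVec_pos hv_re) him

theorem det_ne_zero [DecidableEq m] : M.det ≠ 0 := fun h => by
  obtain ⟨v, hv, hMv⟩ := exists_mulVec_eq_zero_iff.2 h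
  simpa [hMv] using hM.im_star_dotProduct_mulVec_pos hv

theorem im_inv_apply_self_neg [DecidableEq m] (i : m) : (M⁻¹ i i).im < 0 := by
  set w := M⁻¹ *ᵥ Pi.single i 1
  have hMw : M *ᵥ w = Pi.single i 1 := by
    rw [mulVec_mulVec, mul_nonsing_inv M (isUnit_iff_ne_zero.2 hM.det_ne_zero), one_mulVec]
  have hw : w ≠ 0 := fun hw => by simpa [hw] using congrFun hMw i
  have h := hM.im_star_dotProduct_mulVec_pos hw
  rw [hMw, dotProduct_single] at h
  simpa [w, mulVec_single] using h

end IsSiegel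

theorem inv_apply_zero_zero {K : Type*} [Field K] {n : ℕ}
    (M : Matrix (Fin (n + 1)) (Fin (n + 1)) K) :
    M⁻¹ 0 0 = (M.submatrix Fin.succ Fin.succ).det / M.det := by
  rw [inv_def, smul_apply, adjugate_fin_succ_eq_det_submatrix]
  simp [Fin.succAbove_zero, div_eq_inv_mul, Ring.inverse_eq_inv']

theorem IsSiegel.im_det_div_det_submatrix_succ_pos {n : ℕ}
    {M : Matrix (Fin (n + 1)) (Fin (n + 1)) ℂ} (hM : M.IsSiegel) :
    0 < (M.det / (M.submatrix Fin.succ Fin.succ).det).im := by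
  have h := hM.im_inv_apply_self_neg 0
  rw [inv_apply_zero_zero] at h
  rw [← inv_div, Complex.inv_im]
  have hne : (M.submatrix Fin.succ Fin.succ).det / M.det ≠ 0 := fun h0 => by simp [h0] at h
  exact div_pos (neg_pos.2 h) (Complex.normSq_pos.2 hne)

end Matrix

/-- For `M` in the Siegel upper half space `H_n` (complex symmetric with positive definite
imaginary part), `n ≥ 2`, the ratio `det M / det M₁₁` is not real, where `M₁₁` deletes the
first row and column of `M`. -/
theorem det_ratio_not_real (n : ℕ) (M : Matrix (Fin (n + 2)) (Fin (n + 2)) ℂ)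
    (hsym : M.IsSymm) (hpos : (M.map Complex.im).PosDef) :
    ∀ r : ℝ, M.det / (M.submatrix Fin.succ Fin.succ).det ≠ (r : ℂ) := fun r hr => by
  simpa [hr] using Matrix.IsSiegel.im_det_div_det_submatrix_succ_pos ⟨hsym, hpos⟩
end

section
/- Let η be a primitive Dirichlet character modulo N, let k be a positive integer with η(-1) = (-1)^k, and suppose p is a prime with p ≥ 2k and p ∤ 2N. If N is either divisible by at least two distinct primes, or N is a power of a prime dividing 2N, or N is a prime not dividing 2N and η is quadratic, then the generalized Bernoulli number B_{k,η̄} is p-integral (i.e., has p-adic valuation ≥ 0 for every embedding into ℚ̄_p). -/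
/-!
Since `k + 1 < p`, the Bernoulli numbers `B_0, …, B_k` are `p`-integral, hence so are the
coefficients of the Bernoulli polynomial `B_k`; since `p ∤ N`, so is `a / N`. Thus every
`N^(k-1) B_k(a/N)` is a `p`-integral rational, and `B_{k,η̄}` is a sum of such rationals times
values of `η̄`, which are roots of unity or zero, hence integral.
-/

open Finset

/-- An algebraic number `x ∈ ℂ` is `p`-integral if it satisfies a monic polynomial with
rational coefficients whose denominators are prime to `p`. -/
def IsPIntegral (p : ℕ) (x : ℂ) : Prop :=
  ∃ f : Polynomial ℚ, f.Monic ∧ (∀ i, ¬ p ∣ (f.coeff i).den) ∧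
    Polynomial.eval₂ (algebraMap ℚ ℂ) x f = 0

local notation "ℤ_(" p ")" => Valuation.integer (Rat.padicValuation p)

namespace Rat

variable {p : ℕ} [Fact p.Prime]

theorem mem_padicValuation_integer_iff {x : ℚ} : x ∈ ℤ_(p) ↔ ¬ p ∣ x.den := by
  rw [Valuation.mem_integer_iff, padicValuation_le_one_iff]

theorem natCast_inv_mem_padicValuation_integer {m : ℕ} (hm : ¬ p ∣ m) : (m : ℚ)⁻¹ ∈ ℤ_(p) := by
  rw [mem_padicValuation_integer_iff, inv_natCast_den]
  split_ifs
  exacts [Nat.Prime.not_dvd_one Fact.out, hm]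

end Rat

section Bernoulli

variable {p : ℕ} [Fact p.Prime]

-- The recursion for `B'_n` only divides by `n - k + 1 ≤ n + 1 < p`.
theorem bernoulli'_mem_padicValuation_integer {n : ℕ} (hn : n + 1 < p) :
    bernoulli' n ∈ ℤ_(p) := by
  induction n using Nat.strong_induction_on with
  | _ n ih =>
    rw [bernoulli'_def]
    refine sub_mem (one_mem _) (sum_mem fun k hk => ?_)
    have hkn : k < n := mem_range.mp hk
    have hden : ((n : ℚ) - k + 1) = ((n - k + 1 : ℕ) : ℚ) := by
      rw [Nat.cast_add, Nat.cast_sub hkn.le, Nat.cast_one]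
    rw [hden, div_eq_mul_inv]
    refine mul_mem (mul_mem (natCast_mem _ _) (Rat.natCast_inv_mem_padicValuation_integer ?_))
      (ih k hkn (by omega))
    exact fun h => absurd (Nat.le_of_dvd (by omega) h) (by omega)

theorem bernoulli_mem_padicValuation_integer {n : ℕ} (hn : n + 1 < p) :
    bernoulli n ∈ ℤ_(p) :=
  mul_mem (pow_mem (neg_mem (one_mem _)) n) (bernoulli'_mem_padicValuation_integer hn)

theorem Polynomial.eval_bernoulli_mem_padicValuation_integer {n : ℕ} (hn : n + 1 < p)
    {x : ℚ} (hx : x ∈ ℤ_(p)) : (Polynomial.bernoulli n).eval x ∈ ℤ_(p) := by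
  rw [bernoulli_def, eval_finsetSum]
  refine sum_mem fun i _ => ?_
  rw [eval_monomial]
  exact mul_mem (mul_mem (bernoulli_mem_padicValuation_integer (by omega)) (natCast_mem _ _))
    (pow_mem hx i)

end Bernoulli

theorem MulChar.isIntegral_apply {R R' S : Type*} [CommRing R] [Finite Rˣ] [CommRing R']
    [CommRing S] [Algebra S R'] (χ : MulChar R R') (a : R) : IsIntegral S (χ a) := by
  by_cases ha : IsUnit a
  · obtain ⟨u, rfl⟩ := ha
    refine IsIntegral.of_pow (Nat.card_pos (α := Rˣ)) ?_
    rw [← map_pow, ← Units.val_pow_eq_pow_val, pow_card_eq_one', Units.val_one, map_one]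
    exact isIntegral_one
  · rw [χ.map_nonunit ha]
    exact isIntegral_zero

theorem isPIntegral_of_isIntegral {p : ℕ} [Fact p.Prime] {x : ℂ} (hx : IsIntegral ℤ_(p) x) :
    IsPIntegral p x := by
  obtain ⟨f, hf, hfx⟩ := hx
  refine ⟨f.map ℤ_(p).subtype, hf.map _, fun i => ?_, by rwa [Polynomial.eval₂_map]⟩
  rw [Polynomial.coeff_map]
  exact Rat.mem_padicValuation_integer_iff.mp (f.coeff i).2

theorem isIntegral_ratCast_of_mem {p : ℕ} [Fact p.Prime] {q : ℚ} (hq : q ∈ ℤ_(p)) :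
    IsIntegral ℤ_(p) (q : ℂ) :=
  isIntegral_algebraMap (x := (⟨q, hq⟩ : ℤ_(p)))

theorem generalized_bernoulli_p_integral_general (N : ℕ)
    (η : DirichletCharacter ℂ N)
    (k : ℕ)
    (p : ℕ) (hp : p.Prime) (hpk : 2 * k ≤ p) (hpN : ¬ p ∣ 2 * N)
    (B : ℂ)
    (hB : B = (N : ℂ) ^ (k - 1) *
      ∑ a ∈ Finset.Icc 1 N, (starRingEnd ℂ) (η (a : ZMod N)) *
        Polynomial.aeval ((a : ℂ) / (N : ℂ)) (Polynomial.bernoulli k)) :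
    IsPIntegral p B := by
  have : Fact p.Prime := ⟨hp⟩
  have hpN' : ¬ p ∣ N := fun h => hpN (h.mul_left 2)
  have hkp : k + 1 < p := by
    obtain ⟨m, rfl⟩ := hp.odd_of_ne_two (by rintro rfl; exact hpN (dvd_mul_right 2 N))
    have := hp.two_le
    omega
  have hval (a : ℕ) : Polynomial.aeval ((a : ℂ) / (N : ℂ)) (Polynomial.bernoulli k) =
      (((Polynomial.bernoulli k).eval ((a : ℚ) / N) : ℚ) : ℂ) := by
    rw [← Polynomial.coe_aeval_eq_eval, ← eq_ratCast (algebraMap ℚ ℂ),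
      ← Polynomial.aeval_algebraMap_apply, map_div₀, map_natCast, map_natCast]
  have hN : ((N : ℂ) ^ (k - 1)) = (((N ^ (k - 1) : ℕ) : ℚ) : ℂ) := by push_cast; rfl
  apply isPIntegral_of_isIntegral
  rw [hB, hN]
  refine (isIntegral_ratCast_of_mem (natCast_mem _ _)).mul (IsIntegral.sum _ fun a _ => ?_)
  rw [hval, starRingEnd_apply, MulChar.star_apply']
  refine (MulChar.isIntegral_apply _ _).mul (isIntegral_ratCast_of_mem ?_)
  exact Polynomial.eval_bernoulli_mem_padicValuation_integer hkp
    (mul_mem (natCast_mem _ _) (Rat.natCast_inv_mem_padicValuation_integer hpN'))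

/-- `p`-integrality of generalized Bernoulli numbers `B_{k,η̄}` for a primitive Dirichlet
character `η` mod `N` with `η(-1) = (-1)^k`, for primes `p ≥ 2k`, `p ∤ 2N`, under the
stated conditions on `N`.  Here `B_{k,η̄}` is given by the classical formula
`B_{k,χ} = N^{k-1} Σ_{a=1}^{N} χ(a) B_k(a/N)` in terms of Bernoulli polynomials. -/
theorem generalized_bernoulli_p_integral (N : ℕ) [NeZero N]
    (η : DirichletCharacter ℂ N) (hprim : η.IsPrimitive)
    (k : ℕ) (hk : 0 < k) (hparity : η (-1 : ZMod N) = (-1 : ℂ) ^ k)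
    (p : ℕ) (hp : p.Prime) (hpk : 2 * k ≤ p) (hpN : ¬ p ∣ 2 * N)
    (hcases :
      (∃ q r : ℕ, q.Prime ∧ r.Prime ∧ q ≠ r ∧ q ∣ N ∧ r ∣ N) ∨
      (∃ q e : ℕ, q.Prime ∧ q ∣ 2 * N ∧ N = q ^ e) ∨
      (N.Prime ∧ ¬ N ∣ 2 * N ∧ η ^ 2 = 1 ∧ η ≠ 1))
    (B : ℂ)
    (hB : B = (N : ℂ) ^ (k - 1) *
      ∑ a ∈ Finset.Icc 1 N, (starRingEnd ℂ) (η (a : ZMod N)) *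
        Polynomial.aeval ((a : ℂ) / (N : ℂ)) (Polynomial.bernoulli k)) :
    IsPIntegral p B :=
  generalized_bernoulli_p_integral_general N η k p hp hpk hpN B hB
end

section
/- Let p be an odd prime, h a symmetric 2n×2n matrix over ℤ_p with det(h) ≠ 0, and k, n positive integers with k ≥ n+1. Then for every G in M_{2n}(ℤ_p) with 2·v_p(det G) ≤ v_p(det h) and every integer d with 0 ≤ d ≤ 2n and d ≥ 4n - 2k, the quantity ⌊(1/2)v_p(det h) - n + d/2⌋·(2n+1-2k) + ⌊(2n - d/2)(2n - d/2 - 2k)⌋ is greater than or equal to (v_p(det h) - e)·(n - k + 1/2) + n(n - 2k) + e·(n - k), where e = 0 if v_p(det h) is even and e = 1 if v_p(det h) is odd. -/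
/-!
Write `u = n - d/2`. If both floors are dropped, the left side minus the right side is exactly
`e/2 + u(u-1)`, and `u(u-1) ≥ -1/4`, with `u(u-1) ≥ 0` when `d` is even. Restoring the floors
costs `1/4` in the second term when `d` is odd, and gains `(k - n - 1/2)` in the first when `v + d`
is odd, since its coefficient `2n + 1 - 2k` is negative. In each parity case of `v` and `d` these
corrections are absorbed, the gain `k - n - 1/2 ≥ 1/2` paying for the loss when `v` is even and
`d` is odd.
-/

lemma Rat.floor_intCast_div_two (m : ℤ) : (⌊(m : ℚ) / 2⌋ : ℚ) = (m - (m % 2 : ℤ)) / 2 := by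
  rw [show (2 : ℚ) = ((2 : ℕ) : ℚ) by norm_num, Rat.floor_intCast_div_natCast]
  have hm : ((m / 2 : ℤ) : ℚ) * 2 = m - (m % 2 : ℤ) := by
    exact_mod_cast (by omega : m / 2 * 2 = m - m % 2)
  push_cast
  linarith

lemma Rat.floor_half_mul_half_sub (j k : ℤ) :
    (⌊(j : ℚ) / 2 * ((j : ℚ) / 2 - 2 * k)⌋ : ℚ)
      = (j : ℚ) / 2 * ((j : ℚ) / 2 - 2 * k) - ((j % 2 : ℤ) : ℚ) / 4 := by
  obtain ⟨q, r, hr, rfl⟩ : ∃ q r : ℤ, (r = 0 ∨ r = 1) ∧ j = 2 * q + r :=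
    ⟨j / 2, j % 2, Int.emod_two_eq_zero_or_one j, (Int.mul_ediv_add_emod j 2).symm⟩
  rcases hr with rfl | rfl
  · have : ((2 * q + 0 : ℤ) : ℚ) / 2 * (((2 * q + 0 : ℤ) : ℚ) / 2 - 2 * k)
        = ((q * (q - 2 * k) : ℤ) : ℚ) := by push_cast; ring
    rw [this, Int.floor_intCast]
    norm_num
  · have : ((2 * q + 1 : ℤ) : ℚ) / 2 * (((2 * q + 1 : ℤ) : ℚ) / 2 - 2 * k)
        = ((q * q + q - 2 * k * q - k : ℤ) : ℚ) + 1 / 4 := by push_cast; ring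
    rw [this, Int.floor_intCast_add, show (2 * q + 1) % 2 = 1 by omega]
    norm_num

lemma Int.neg_emod_two_le_mul_sub_two (m : ℤ) : -(m % 2) ≤ m * (m - 2) := by
  rcases Int.emod_two_eq_zero_or_one m with h | h
  · obtain ⟨t, rfl⟩ : ∃ t, m = 2 * t := ⟨m / 2, by omega⟩
    rcases le_or_gt t 0 with ht | ht <;> nlinarith
  · nlinarith [sq_nonneg (m - 1)]

lemma parity_correction_nonneg (v d n k : ℤ) (hk : n + 1 ≤ k) :
    0 ≤ v % 2 + (v - 2 * n + d) % 2 * (2 * k - 2 * n - 1) - d % 2 := by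
  rcases Int.emod_two_eq_zero_or_one (v - 2 * n + d) with hg | hg <;> rw [hg] <;> omega

theorem siegel_floor_inequality (v d n k : ℤ) (hk : n + 1 ≤ k) :
    (⌊(v : ℚ) / 2 - n + (d : ℚ) / 2⌋ : ℚ) * (2 * n + 1 - 2 * k)
        + (⌊((2 * n : ℚ) - d / 2) * ((2 * n : ℚ) - d / 2 - 2 * k)⌋ : ℚ)
      ≥ ((v : ℚ) - (v % 2 : ℤ)) * (n - k + 1 / 2) + n * (n - 2 * k) + (v % 2 : ℤ) * (n - k) := by
  have hfirst : (v : ℚ) / 2 - n + (d : ℚ) / 2 = ((v - 2 * n + d : ℤ) : ℚ) / 2 := by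
    push_cast; ring
  have hsecond : ((2 * n : ℚ) - d / 2) * ((2 * n : ℚ) - d / 2 - 2 * k)
      = ((4 * n - d : ℤ) : ℚ) / 2 * (((4 * n - d : ℤ) : ℚ) / 2 - 2 * k) := by
    push_cast; ring
  rw [hfirst, hsecond, Rat.floor_intCast_div_two, Rat.floor_half_mul_half_sub,
    show (4 * n - d) % 2 = d % 2 by omega]
  have hu := Int.neg_emod_two_le_mul_sub_two (2 * n - d)
  rw [show (2 * n - d) % 2 = d % 2 by omega] at hu
  have hpar := parity_correction_nonneg v d n k hk
  generalize v % 2 = e at *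
  generalize d % 2 = f at *
  generalize (v - 2 * n + d) % 2 = g at *
  have hu' : (-f : ℚ) ≤ (2 * n - d) * (2 * n - d - 2) := by exact_mod_cast hu
  have hpar' : (0 : ℚ) ≤ e + g * (2 * k - 2 * n - 1) - f := by exact_mod_cast hpar
  push_cast
  linear_combination hu' / 4 + hpar' / 2

theorem siegel_series_inequality_large_d_general (p : ℕ)
    [Fact p.Prime] (n k : ℕ) (hk : n + 1 ≤ k)
    (h : Matrix (Fin (2 * n)) (Fin (2 * n)) ℤ_[p])
    (d : ℕ)
    (e : ℤ) (he : e = if Even (h.det).valuation then 0 else 1) :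
    ((⌊((h.det).valuation : ℚ) / 2 - n + (d : ℚ) / 2⌋ : ℚ) * (2 * n + 1 - 2 * k)
        + (⌊((2 * n : ℚ) - d / 2) * ((2 * n : ℚ) - d / 2 - 2 * k)⌋ : ℚ))
      ≥ (((h.det).valuation : ℚ) - e) * (n - k + 1 / 2)
          + n * (n - 2 * k) + e * (n - k) := by
  have he' : e = ((h.det).valuation : ℤ) % 2 := by
    rw [he]
    split_ifs with hv
    · have := Nat.even_iff.mp hv; omega
    · have := Nat.odd_iff.mp (Nat.not_even_iff_odd.mp hv); omega
  subst he'
  have key := siegel_floor_inequality (h.det).valuation d n k (by exact_mod_cast hk)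
  push_cast at key ⊢
  exact key

/-- The arithmetic inequality used in bounding local Siegel series: with
`v = v_p(det h)` and `e` its parity, for `G ∈ M_{2n}(ℤ_p)` with `2·v_p(det G) ≤ v` and
any integer `d` with `0 ≤ d ≤ 2n`, `d ≥ 4n - 2k`,
`⌊v/2 - n + d/2⌋(2n+1-2k) + ⌊(2n-d/2)(2n-d/2-2k)⌋ ≥ (v-e)(n-k+1/2) + n(n-2k) + e(n-k)`. -/
theorem siegel_series_inequality_large_d (p : ℕ) (hp : p.Prime) (hodd : p ≠ 2)
    [Fact p.Prime] (n k : ℕ) (hn : 0 < n) (hk : n + 1 ≤ k)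
    (h : Matrix (Fin (2 * n)) (Fin (2 * n)) ℤ_[p]) (hsym : h.IsSymm)
    (hdet : h.det ≠ 0)
    (G : Matrix (Fin (2 * n)) (Fin (2 * n)) ℤ_[p])
    (hG : 2 * (G.det).valuation ≤ (h.det).valuation)
    (d : ℕ) (hd : d ≤ 2 * n) (hd' : (4 * n : ℤ) - 2 * k ≤ d)
    (e : ℤ) (he : e = if Even (h.det).valuation then 0 else 1) :
    ((⌊((h.det).valuation : ℚ) / 2 - n + (d : ℚ) / 2⌋ : ℚ) * (2 * n + 1 - 2 * k)
        + (⌊((2 * n : ℚ) - d / 2) * ((2 * n : ℚ) - d / 2 - 2 * k)⌋ : ℚ))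
      ≥ (((h.det).valuation : ℚ) - e) * (n - k + 1 / 2)
          + n * (n - 2 * k) + e * (n - k) :=
  siegel_series_inequality_large_d_general p n k hk h d e he
end
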